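/- Let L, M, N be positive integers and let g_0, …, g_{L−1} and h_0, …, h_{L−1} be real-valued elements of ℓ²(ℤ²,ℍ). Then the following are equivalent: (1) the Gabor systems G(g,L,M,N) and G(h,L,M,N) are dual, i.e. for all finitely supported f, φ : ℤ×ℤ → ℍ, ∑_{l=0}^{L−1} ∑_{n∈ℤ²} ∑_{m∈{0,…,M−1}²} ⟨f, E_{m/M}T_{nN}g_l⟩·⟨E_{m/M}T_{nN}h_l, φ⟩ = ⟨f, φ⟩; (2) for every k ∈ {0,…,N−1}² and every p ∈ ℤ², ∑_{l=0}^{L−1} ∑_{n∈ℤ²} g_l(k−nN)·h_l(k+pM−nN) = (1/M²) if p = (0,0) and = 0 otherwise, where nN := (n₁N,n₂N) and pM := (p₁M,p₂M). -/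

import Mathlib

noncomputable section

open scoped Real

/-- The real quaternions. -/
abbrev ℍ : Type := Quaternion ℝ

/-- `e_i θ = cos θ + (sin θ) i`. -/
def eI (θ : ℝ) : ℍ := ⟨Real.cos θ, Real.sin θ, 0, 0⟩

/-- `e_j θ = cos θ + (sin θ) j`. -/
def eJ (θ : ℝ) : ℍ := ⟨Real.cos θ, 0, Real.sin θ, 0⟩

/-- Quaternionic pairing `⟨f,g⟩ = ∑ conj (f k) * g k`. -/
def qpair (f g : ℤ × ℤ → ℍ) : ℍ := ∑' k : ℤ × ℤ, star (f k) * g k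

/-- Membership in `ℓ²(ℤ², ℍ)`. -/
def MemL2 (f : ℤ × ℤ → ℍ) : Prop := Summable fun k : ℤ × ℤ => ‖f k‖ ^ 2

/-- `‖f‖² = ∑ |f k|²`. -/
def normSq2 (f : ℤ × ℤ → ℍ) : ℝ := ∑' k : ℤ × ℤ, ‖f k‖ ^ 2

/-- A window is real-valued if all its values lie in `ℝ ⊆ ℍ`. -/
def IsRealValued (f : ℤ × ℤ → ℍ) : Prop := ∀ k : ℤ × ℤ, f k = ((f k).re : ℍ)

/-- The Gabor atom `E_{m/M} T_{nN} w`. -/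
def gaborAtom (M N : ℕ) (w : ℤ × ℤ → ℍ) (m : ℕ × ℕ) (n : ℤ × ℤ) : ℤ × ℤ → ℍ :=
  fun k =>
    eI (2 * π * (m.1 : ℝ) * (k.1 : ℝ) / (M : ℝ)) *
      w (k.1 - n.1 * (N : ℤ), k.2 - n.2 * (N : ℤ)) *
      eJ (2 * π * (m.2 : ℝ) * (k.2 : ℝ) / (M : ℝ))

/-- The index square `{0, …, M-1}²`. -/
abbrev msq (M : ℕ) : Finset (ℕ × ℕ) := Finset.range M ×ˢ Finset.range M

/-- `k ∈ {0, …, N-1}²` inside `ℤ²`. -/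
def InNsq (N : ℕ) (k : ℤ × ℤ) : Prop :=
  0 ≤ k.1 ∧ k.1 < (N : ℤ) ∧ 0 ≤ k.2 ∧ k.2 < (N : ℤ)

/-- `∑_{l<L} ∑_{n∈ℤ²} ∑_{m∈{0,…,M-1}²} |⟨E_{m/M}T_{nN}g_l, h⟩|²`. -/
def frameSum (L M N : ℕ) (g : ℕ → ℤ × ℤ → ℍ) (h : ℤ × ℤ → ℍ) : ℝ :=
  ∑ l ∈ Finset.range L, ∑' n : ℤ × ℤ, ∑ m ∈ msq M,
    ‖qpair (gaborAtom M N (g l) m n) h‖ ^ 2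

/-- Bessel system with bound `B`. -/
def IsBessel (L M N : ℕ) (g : ℕ → ℤ × ℤ → ℍ) (B : ℝ) : Prop :=
  ∀ h : ℤ × ℤ → ℍ, MemL2 h → frameSum L M N g h ≤ B * normSq2 h

/-- Frame with bounds `A ≤ B`. -/
def IsFrame (L M N : ℕ) (g : ℕ → ℤ × ℤ → ℍ) (A B : ℝ) : Prop :=
  ∀ h : ℤ × ℤ → ℍ, MemL2 h →
    A * normSq2 h ≤ frameSum L M N g h ∧ frameSum L M N g h ≤ B * normSq2 h

/-- Parseval frame. -/
def IsParseval (L M N : ℕ) (g : ℕ → ℤ × ℤ → ℍ) : Prop :=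
  ∀ h : ℤ × ℤ → ℍ, MemL2 h → frameSum L M N g h = normSq2 h

/-- Orthonormal system. -/
def IsON (L M N : ℕ) (g : ℕ → ℤ × ℤ → ℍ) : Prop :=
  ∀ l l' : ℕ, l < L → l' < L → ∀ m ∈ msq M, ∀ m' ∈ msq M, ∀ n n' : ℤ × ℤ,
    qpair (gaborAtom M N (g l) m n) (gaborAtom M N (g l') m' n') =
      if l = l' ∧ m = m' ∧ n = n' then 1 else 0

/-- `G(k,p) = ∑_{l<L} ∑_{n∈ℤ²} g_l(k-nN) g_l(k+pM-nN)`. -/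
def gaborG (L M N : ℕ) (g : ℕ → ℤ × ℤ → ℍ) (k p : ℤ × ℤ) : ℍ :=
  ∑ l ∈ Finset.range L, ∑' n : ℤ × ℤ,
    g l (k.1 - n.1 * (N : ℤ), k.2 - n.2 * (N : ℤ)) *
      g l (k.1 + p.1 * (M : ℤ) - n.1 * (N : ℤ), k.2 + p.2 * (M : ℤ) - n.2 * (N : ℤ))

/-- Mixed version: `∑_{l<L} ∑_{n∈ℤ²} g_l(k-nN) h_l(k+pM-nN)`. -/
def gaborGmix (L M N : ℕ) (g h : ℕ → ℤ × ℤ → ℍ) (k p : ℤ × ℤ) : ℍ :=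
  ∑ l ∈ Finset.range L, ∑' n : ℤ × ℤ,
    g l (k.1 - n.1 * (N : ℤ), k.2 - n.2 * (N : ℤ)) *
      h l (k.1 + p.1 * (M : ℤ) - n.1 * (N : ℤ), k.2 + p.2 * (M : ℤ) - n.2 * (N : ℤ))

/-- `∑_{l<L} ∑_{n∈ℤ²} |g_l(k-nN)|²`. -/
def winSum (L N : ℕ) (g : ℕ → ℤ × ℤ → ℍ) (k : ℤ × ℤ) : ℝ :=
  ∑ l ∈ Finset.range L, ∑' n : ℤ × ℤ,
    ‖g l (k.1 - n.1 * (N : ℤ), k.2 - n.2 * (N : ℤ))‖ ^ 2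

/-- Support of diameter `< M` in every row and every column. -/
def DiamLt (M : ℕ) (f : ℤ × ℤ → ℍ) : Prop :=
  (∀ k₂ k₁ k₁' : ℤ, f (k₁, k₂) ≠ 0 → f (k₁', k₂) ≠ 0 → |k₁ - k₁'| < (M : ℤ)) ∧
  (∀ k₁ k₂ k₂' : ℤ, f (k₁, k₂) ≠ 0 → f (k₁, k₂') ≠ 0 → |k₂ - k₂'| < (M : ℤ))

/-- `M`-periodicity. -/
def MPeriodic (M : ℕ) (f : ℤ × ℤ → ℍ) : Prop :=
  ∀ k : ℤ × ℤ, f (k.1 + (M : ℤ), k.2) = f k ∧ f (k.1, k.2 + (M : ℤ)) = f k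

/-- Duality of two Gabor systems (on finitely supported sequences). -/
def AreDual (L M N : ℕ) (g h : ℕ → ℤ × ℤ → ℍ) : Prop :=
  ∀ f φ : ℤ × ℤ → ℍ, (Function.support f).Finite → (Function.support φ).Finite →
    (∑ l ∈ Finset.range L, ∑' n : ℤ × ℤ, ∑ m ∈ msq M,
      qpair f (gaborAtom M N (g l) m n) * qpair (gaborAtom M N (h l) m n) φ)
      = qpair f φ

/-!
Expanding finitely supported `f`, `φ` in the standard basis turns the duality sum into
`∑_{a,b} conj (f a) · K(a,b) · φ b`, where `K(a,b) = ∑_l ∑_n ∑_m (E_{m/M}T_{nN}g_l)(a) ·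
conj ((E_{m/M}T_{nN}h_l)(b))`, so duality means `K(a,b) = δ_{ab}`. Real windows commute with
every quaternion, so the modulations collect into
`e_i(2π m₁a₁/M) · e_j(2π m₂(a₂-b₂)/M) · e_i(-2π m₁b₁/M)`. Summing over `m₂` first makes the
middle factor the real number `M · [M ∣ a₂ - b₂]`; the two `e_i` factors then merge, and the sum
over `m₁` gives `M · [M ∣ a₁ - b₁]`. Hence `K(a,b) = M² · G(a,b) · [a ≡ b mod Mℤ²]` with
`G(a,b) = ∑_l ∑_n g_l(a - nN) h_l(b - nN)`. Writing `b = a + pM`, and using that `G` is invariant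
under simultaneous translation by `Nℤ²`, the condition `K = δ` becomes the stated one on
`{0,…,N-1}²`.
-/

open Finset in
theorem IsPrimitiveRoot.sum_range_zpow_pow {K : Type*} [Field K] {ζ : K} {M : ℕ}
    (hζ : IsPrimitiveRoot ζ M) (d : ℤ) :
    ∑ m ∈ range M, (ζ ^ d) ^ m = if (M : ℤ) ∣ d then (M : K) else 0 := by
  split_ifs with hd
  · simp [(hζ.zpow_eq_one_iff_dvd d).mpr hd]
  · have hne : ζ ^ d ≠ 1 := fun h => hd ((hζ.zpow_eq_one_iff_dvd d).mp h)
    rw [geom_sum_eq hne, ← zpow_natCast, ← zpow_mul, mul_comm, zpow_mul, zpow_natCast,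
      hζ.pow_eq_one, one_zpow, sub_self, zero_div]

open Finset in
theorem sum_range_exp_two_pi_mul_I {M : ℕ} (hM : 0 < M) (d : ℤ) :
    ∑ m ∈ range M, Complex.exp (((2 * π * (m : ℝ) * (d : ℝ) / (M : ℝ) : ℝ) : ℂ) * Complex.I) =
      if (M : ℤ) ∣ d then (M : ℂ) else 0 := by
  rw [← (Complex.isPrimitiveRoot_exp M hM.ne').sum_range_zpow_pow d]
  refine sum_congr rfl fun m _ => ?_
  rw [← Complex.exp_int_mul, ← Complex.exp_nat_mul]
  congr 1
  push_cast
  field_simp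

open Finset in
theorem sum_range_liftAux_exp {A : Type*} [Ring A] [Algebra ℝ A] (u : A) (hu : u * u = -1)
    {M : ℕ} (hM : 0 < M) (d : ℤ) :
    ∑ m ∈ range M, Complex.liftAux u hu
        (Complex.exp (((2 * π * (m : ℝ) * (d : ℝ) / (M : ℝ) : ℝ) : ℂ) * Complex.I)) =
      if (M : ℤ) ∣ d then (M : A) else 0 := by
  rw [← map_sum, sum_range_exp_two_pi_mul_I hM]
  split_ifs <;> simp

instance : CharZero ℍ := charZero_of_injective_algebraMap (algebraMap ℝ ℍ).injective

def quatI : ℍ := ⟨0, 1, 0, 0⟩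

def quatJ : ℍ := ⟨0, 0, 1, 0⟩

open scoped Quaternion in
theorem quatI_mul_self : quatI * quatI = -1 := by
  ext <;> simp <;> simp [quatI]

open scoped Quaternion in
theorem quatJ_mul_self : quatJ * quatJ = -1 := by
  ext <;> simp <;> simp [quatJ]

theorem eI_eq_liftAux (θ : ℝ) :
    eI θ = Complex.liftAux quatI quatI_mul_self
      (Complex.exp ((θ : ℂ) * Complex.I)) := by
  rw [Complex.liftAux_apply, Complex.exp_ofReal_mul_I_re, Complex.exp_ofReal_mul_I_im]
  ext <;> simp <;> simp [eI, quatI]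

theorem eJ_eq_liftAux (θ : ℝ) :
    eJ θ = Complex.liftAux quatJ quatJ_mul_self
      (Complex.exp ((θ : ℂ) * Complex.I)) := by
  rw [Complex.liftAux_apply, Complex.exp_ofReal_mul_I_re, Complex.exp_ofReal_mul_I_im]
  ext <;> simp <;> simp [eJ, quatJ]

theorem eI_mul_eI (a b : ℝ) : eI a * eI b = eI (a + b) := by
  rw [eI_eq_liftAux, eI_eq_liftAux, eI_eq_liftAux, ← map_mul, ← Complex.exp_add,
    Complex.ofReal_add, add_mul]

theorem eJ_mul_eJ (a b : ℝ) : eJ a * eJ b = eJ (a + b) := by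
  rw [eJ_eq_liftAux, eJ_eq_liftAux, eJ_eq_liftAux, ← map_mul, ← Complex.exp_add,
    Complex.ofReal_add, add_mul]

theorem star_eI (θ : ℝ) : star (eI θ) = eI (-θ) := by
  ext <;> simp <;> simp [eI]

theorem star_eJ (θ : ℝ) : star (eJ θ) = eJ (-θ) := by
  ext <;> simp <;> simp [eJ]

theorem sum_range_eI {M : ℕ} (hM : 0 < M) (d : ℤ) :
    ∑ m ∈ Finset.range M, eI (2 * π * (m : ℝ) * (d : ℝ) / (M : ℝ)) =
      if (M : ℤ) ∣ d then (M : ℍ) else 0 := by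
  simp_rw [eI_eq_liftAux]
  exact sum_range_liftAux_exp _ _ hM d

theorem sum_range_eJ {M : ℕ} (hM : 0 < M) (d : ℤ) :
    ∑ m ∈ Finset.range M, eJ (2 * π * (m : ℝ) * (d : ℝ) / (M : ℝ)) =
      if (M : ℤ) ∣ d then (M : ℍ) else 0 := by
  simp_rw [eJ_eq_liftAux]
  exact sum_range_liftAux_exp _ _ hM d

theorem gaborAtom_mul_star_gaborAtom {M N : ℕ} {g h : ℤ × ℤ → ℍ} (hg : IsRealValued g)
    (hh : IsRealValued h) (m : ℕ × ℕ) (n a b : ℤ × ℤ) :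
    gaborAtom M N g m n a * star (gaborAtom M N h m n b) =
      g (a.1 - n.1 * N, a.2 - n.2 * N) * h (b.1 - n.1 * N, b.2 - n.2 * N) *
        (eI (2 * π * (m.1 : ℝ) * (a.1 : ℝ) / M) *
          eJ (2 * π * (m.2 : ℝ) * ((a.2 - b.2 : ℤ) : ℝ) / M) *
          eI (-(2 * π * (m.1 : ℝ) * (b.1 : ℝ) / M))) := by
  have hJ : eJ (2 * π * (m.2 : ℝ) * (a.2 : ℝ) / M) * eJ (-(2 * π * (m.2 : ℝ) * (b.2 : ℝ) / M)) =
      eJ (2 * π * (m.2 : ℝ) * ((a.2 - b.2 : ℤ) : ℝ) / M) := by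
    rw [eJ_mul_eJ]; congr 1; push_cast; ring
  simp only [gaborAtom, star_mul, star_eI, star_eJ]
  rw [hg (a.1 - n.1 * N, _), hh (b.1 - n.1 * N, _), Quaternion.star_coe, ← hJ]
  simp only [Quaternion.coe_mul_eq_smul, Quaternion.mul_coe_eq_smul, smul_mul_assoc,
    mul_smul_comm, smul_smul, mul_assoc, mul_comm]

def congrWeight (M : ℕ) (a b : ℤ × ℤ) : ℍ :=
  if (M : ℤ) ∣ a.1 - b.1 ∧ (M : ℤ) ∣ a.2 - b.2 then (M : ℍ) ^ 2 else 0

theorem sum_gaborAtom_mul_star_gaborAtom {M : ℕ} (hM : 0 < M) (N : ℕ) {g h : ℤ × ℤ → ℍ}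
    (hg : IsRealValued g) (hh : IsRealValued h) (n a b : ℤ × ℤ) :
    ∑ m ∈ msq M, gaborAtom M N g m n a * star (gaborAtom M N h m n b) =
      g (a.1 - n.1 * N, a.2 - n.2 * N) * h (b.1 - n.1 * N, b.2 - n.2 * N) *
        congrWeight M a b := by
  have hcentral : ∀ c : ℍ, ∀ d : ℤ, (if (M : ℤ) ∣ d then (M : ℍ) else 0) * c =
      c * (if (M : ℤ) ∣ d then (M : ℍ) else 0) := by
    intro c d; split_ifs <;> simp [Nat.cast_comm]
  have hinner : ∀ m₁ : ℕ, ∑ m₂ ∈ Finset.range M, eI (2 * π * (m₁ : ℝ) * (a.1 : ℝ) / M) *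
        eJ (2 * π * (m₂ : ℝ) * ((a.2 - b.2 : ℤ) : ℝ) / M) *
        eI (-(2 * π * (m₁ : ℝ) * (b.1 : ℝ) / M)) =
      (if (M : ℤ) ∣ a.2 - b.2 then (M : ℍ) else 0) *
        eI (2 * π * (m₁ : ℝ) * ((a.1 - b.1 : ℤ) : ℝ) / M) := by
    intro m₁
    rw [← Finset.sum_mul, ← Finset.mul_sum, sum_range_eJ hM, ← hcentral, mul_assoc, eI_mul_eI]
    congr 2; push_cast; ring
  simp only [gaborAtom_mul_star_gaborAtom hg hh, ← Finset.mul_sum, Finset.sum_product, hinner,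
    sum_range_eI hM, congrWeight]
  split_ifs <;> simp_all [sq]

theorem sub_mul_injective {N : ℕ} (hN : 0 < N) (a : ℤ × ℤ) :
    Function.Injective fun n : ℤ × ℤ => (a.1 - n.1 * N, a.2 - n.2 * N) := by
  intro n n' hnn'
  have hN' : (N : ℤ) ≠ 0 := by exact_mod_cast hN.ne'
  simp only [Prod.mk.injEq, sub_right_inj, mul_left_inj' hN'] at hnn'
  exact Prod.ext hnn'.1 hnn'.2

theorem summable_mul_comp_sub_mul {N : ℕ} (hN : 0 < N) {g h : ℤ × ℤ → ℍ} (hg : MemL2 g)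
    (hh : MemL2 h) (a b : ℤ × ℤ) :
    Summable fun n : ℤ × ℤ =>
      g (a.1 - n.1 * N, a.2 - n.2 * N) * h (b.1 - n.1 * N, b.2 - n.2 * N) := by
  refine Summable.of_norm <| Summable.of_nonneg_of_le (fun _ => norm_nonneg _) (fun n => ?_)
    (((hg.comp_injective (sub_mul_injective hN a)).add
      (hh.comp_injective (sub_mul_injective hN b))).div_const 2)
  dsimp only [Function.comp_apply, Pi.add_apply]
  linarith [norm_mul_le (g (a.1 - n.1 * N, a.2 - n.2 * N)) (h (b.1 - n.1 * N, b.2 - n.2 * N)),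
    two_mul_le_add_sq ‖g (a.1 - n.1 * N, a.2 - n.2 * N)‖ ‖h (b.1 - n.1 * N, b.2 - n.2 * N)‖]

def gaborKernel (L N : ℕ) (g h : ℕ → ℤ × ℤ → ℍ) (a b : ℤ × ℤ) : ℍ :=
  ∑ l ∈ Finset.range L, ∑' n : ℤ × ℤ,
    g l (a.1 - n.1 * N, a.2 - n.2 * N) * h l (b.1 - n.1 * N, b.2 - n.2 * N)

theorem gaborKernel_add_mul (L N : ℕ) (g h : ℕ → ℤ × ℤ → ℍ) (a b q : ℤ × ℤ) :
    gaborKernel L N g h (a.1 + q.1 * N, a.2 + q.2 * N) (b.1 + q.1 * N, b.2 + q.2 * N) =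
      gaborKernel L N g h a b := by
  refine Finset.sum_congr rfl fun l _ => ?_
  rw [← (Equiv.addRight q).tsum_eq]
  refine tsum_congr fun n => ?_
  simp only [Equiv.coe_addRight, Prod.fst_add, Prod.snd_add]
  ring_nf

theorem gaborGmix_eq_gaborKernel (L M N : ℕ) (g h : ℕ → ℤ × ℤ → ℍ) (k p : ℤ × ℤ) :
    gaborGmix L M N g h k p = gaborKernel L N g h k (k.1 + p.1 * M, k.2 + p.2 * M) := rfl

theorem qpair_eq_sum_left {f : ℤ × ℤ → ℍ} (s : Finset (ℤ × ℤ)) (hf : ∀ a ∉ s, f a = 0)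
    (w : ℤ × ℤ → ℍ) : qpair f w = ∑ a ∈ s, star (f a) * w a :=
  tsum_eq_sum fun a ha => by rw [hf a ha, star_zero, zero_mul]

theorem qpair_eq_sum_right {φ : ℤ × ℤ → ℍ} (t : Finset (ℤ × ℤ)) (hφ : ∀ b ∉ t, φ b = 0)
    (w : ℤ × ℤ → ℍ) : qpair w φ = ∑ b ∈ t, star (w b) * φ b :=
  tsum_eq_sum fun b hb => by rw [hφ b hb, mul_zero]

theorem sum_qpair_gaborAtom_mul_qpair {M : ℕ} (hM : 0 < M) (N : ℕ) {g h : ℤ × ℤ → ℍ}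
    (hg : IsRealValued g) (hh : IsRealValued h) {f φ : ℤ × ℤ → ℍ} (s t : Finset (ℤ × ℤ))
    (hf : ∀ a ∉ s, f a = 0) (hφ : ∀ b ∉ t, φ b = 0) (n : ℤ × ℤ) :
    ∑ m ∈ msq M, qpair f (gaborAtom M N g m n) * qpair (gaborAtom M N h m n) φ =
      ∑ a ∈ s, ∑ b ∈ t, star (f a) *
        (g (a.1 - n.1 * N, a.2 - n.2 * N) * h (b.1 - n.1 * N, b.2 - n.2 * N) *
          congrWeight M a b) * φ b := by
  simp only [qpair_eq_sum_left s hf, qpair_eq_sum_right t hφ, Finset.sum_mul_sum]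
  rw [Finset.sum_comm]
  refine Finset.sum_congr rfl fun a _ => ?_
  rw [Finset.sum_comm]
  refine Finset.sum_congr rfl fun b _ => ?_
  rw [← sum_gaborAtom_mul_star_gaborAtom hM N hg hh, Finset.mul_sum, Finset.sum_mul]
  simp only [mul_assoc]

theorem sum_tsum_sum_qpair_gaborAtom_mul_qpair {L M N : ℕ} (hM : 0 < M) (hN : 0 < N)
    {g h : ℕ → ℤ × ℤ → ℍ} (hg : ∀ l < L, MemL2 (g l)) (hh : ∀ l < L, MemL2 (h l))
    (hgreal : ∀ l < L, IsRealValued (g l)) (hhreal : ∀ l < L, IsRealValued (h l))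
    {f φ : ℤ × ℤ → ℍ} (s t : Finset (ℤ × ℤ)) (hf : ∀ a ∉ s, f a = 0) (hφ : ∀ b ∉ t, φ b = 0) :
    ∑ l ∈ Finset.range L, ∑' n : ℤ × ℤ, ∑ m ∈ msq M,
        qpair f (gaborAtom M N (g l) m n) * qpair (gaborAtom M N (h l) m n) φ =
      ∑ a ∈ s, ∑ b ∈ t, star (f a) * (gaborKernel L N g h a b * congrWeight M a b) * φ b := by
  have hl : ∀ l ∈ Finset.range L, ∑' n : ℤ × ℤ, ∑ m ∈ msq M,
        qpair f (gaborAtom M N (g l) m n) * qpair (gaborAtom M N (h l) m n) φ =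
      ∑ a ∈ s, ∑ b ∈ t, star (f a) * ((∑' n : ℤ × ℤ,
        g l (a.1 - n.1 * N, a.2 - n.2 * N) * h l (b.1 - n.1 * N, b.2 - n.2 * N)) *
          congrWeight M a b) * φ b := by
    intro l hl
    have hlL := Finset.mem_range.mp hl
    have hgh := summable_mul_comp_sub_mul hN (hg l hlL) (hh l hlL)
    have hsum : ∀ a b, Summable fun n : ℤ × ℤ => star (f a) *
        (g l (a.1 - n.1 * N, a.2 - n.2 * N) * h l (b.1 - n.1 * N, b.2 - n.2 * N) *
          congrWeight M a b) * φ b := fun a b =>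
      (((hgh a b).mul_right _).mul_left _).mul_right _
    simp only [sum_qpair_gaborAtom_mul_qpair hM N (hgreal l hlL) (hhreal l hlL) s t hf hφ]
    rw [Summable.tsum_finsetSum fun a _ => summable_sum fun b _ => hsum a b]
    refine Finset.sum_congr rfl fun a _ => ?_
    rw [Summable.tsum_finsetSum fun b _ => hsum a b]
    refine Finset.sum_congr rfl fun b _ => ?_
    rw [tsum_mul_right, tsum_mul_left, tsum_mul_right]
  rw [Finset.sum_congr rfl hl, Finset.sum_comm]
  refine Finset.sum_congr rfl fun a _ => ?_
  rw [Finset.sum_comm]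
  refine Finset.sum_congr rfl fun b _ => ?_
  rw [gaborKernel, ← Finset.sum_mul, ← Finset.mul_sum, ← Finset.sum_mul]

theorem finite_support_single_one (a : ℤ × ℤ) :
    (Function.support (Pi.single a 1 : ℤ × ℤ → ℍ)).Finite :=
  (Set.finite_singleton a).subset Pi.support_single_subset

theorem areDual_iff_gaborKernel_mul_congrWeight {L M N : ℕ} (hM : 0 < M) (hN : 0 < N)
    {g h : ℕ → ℤ × ℤ → ℍ} (hg : ∀ l < L, MemL2 (g l)) (hh : ∀ l < L, MemL2 (h l))
    (hgreal : ∀ l < L, IsRealValued (g l)) (hhreal : ∀ l < L, IsRealValued (h l)) :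
    AreDual L M N g h ↔
      ∀ a b, gaborKernel L N g h a b * congrWeight M a b = if a = b then 1 else 0 := by
  constructor
  · intro hdual a b
    have hsingle : ∀ c x : ℤ × ℤ, x ∉ ({c} : Finset (ℤ × ℤ)) →
        (Pi.single c 1 : ℤ × ℤ → ℍ) x = 0 :=
      fun c x hx => Pi.single_eq_of_ne (Finset.notMem_singleton.mp hx) _
    have hab := hdual _ _ (finite_support_single_one a) (finite_support_single_one b)
    rw [sum_tsum_sum_qpair_gaborAtom_mul_qpair hM hN hg hh hgreal hhreal {a} {b} (hsingle a)
      (hsingle b), qpair_eq_sum_left {a} (hsingle a)] at hab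
    simp only [Finset.sum_singleton, Pi.single_eq_same, star_one, one_mul, mul_one] at hab
    rw [hab, Pi.single_apply]
  · intro hK f φ hf hφ
    have hs : ∀ a ∉ hf.toFinset, f a = 0 := fun a ha => by simpa using ha
    have ht : ∀ b ∉ hφ.toFinset, φ b = 0 := fun b hb => by simpa using hb
    rw [sum_tsum_sum_qpair_gaborAtom_mul_qpair hM hN hg hh hgreal hhreal _ _ hs ht,
      qpair_eq_sum_left _ hs]
    refine Finset.sum_congr rfl fun a _ => ?_
    simp only [hK, mul_ite, ite_mul, mul_one, mul_zero, zero_mul, Finset.sum_ite_eq]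
    split_ifs with ha
    · rfl
    · rw [ht a ha, mul_zero]

theorem congrWeight_add_mul (M : ℕ) (a p : ℤ × ℤ) :
    congrWeight M a (a.1 + p.1 * M, a.2 + p.2 * M) = (M : ℍ) ^ 2 :=
  if_pos ⟨⟨-p.1, by ring⟩, ⟨-p.2, by ring⟩⟩

theorem self_eq_add_mul_iff {M : ℕ} (hM : 0 < M) (a p : ℤ × ℤ) :
    a = (a.1 + p.1 * M, a.2 + p.2 * M) ↔ p = 0 := by
  simp [Prod.ext_iff, hM.ne']

theorem gaborKernel_mul_congrWeight_iff {L M : ℕ} (hM : 0 < M) (N : ℕ) (g h : ℕ → ℤ × ℤ → ℍ) :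
    (∀ a b, gaborKernel L N g h a b * congrWeight M a b = if a = b then 1 else 0) ↔
      ∀ a p : ℤ × ℤ, gaborKernel L N g h a (a.1 + p.1 * M, a.2 + p.2 * M) =
        if p = 0 then ((M : ℍ) ^ 2)⁻¹ else 0 := by
  have hM2 : (M : ℍ) ^ 2 ≠ 0 := pow_ne_zero 2 (Nat.cast_ne_zero.mpr hM.ne')
  constructor
  · intro hK a p
    have := hK a (a.1 + p.1 * M, a.2 + p.2 * M)
    simp only [congrWeight_add_mul, self_eq_add_mul_iff hM] at this
    split_ifs at this ⊢
    · exact eq_inv_of_mul_eq_one_left this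
    · exact (mul_eq_zero.mp this).resolve_right hM2
  · intro hK a b
    by_cases hab : ∃ p : ℤ × ℤ, b = (a.1 + p.1 * M, a.2 + p.2 * M)
    · obtain ⟨p, rfl⟩ := hab
      simp only [hK, congrWeight_add_mul, self_eq_add_mul_iff hM]
      split_ifs
      · exact inv_mul_cancel₀ hM2
      · exact zero_mul _
    · rw [congrWeight, if_neg, mul_zero, if_neg]
      · rintro rfl
        exact hab ⟨0, by simp⟩
      · rintro ⟨⟨c₁, hc₁⟩, ⟨c₂, hc₂⟩⟩
        exact hab ⟨(-c₁, -c₂), Prod.ext (by simp; linarith) (by simp; linarith)⟩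

theorem exists_inNsq_add_mul {N : ℕ} (hN : 0 < N) (a : ℤ × ℤ) :
    ∃ k q : ℤ × ℤ, InNsq N k ∧ a = (k.1 + q.1 * N, k.2 + q.2 * N) := by
  have hN' : (0 : ℤ) < N := by exact_mod_cast hN
  refine ⟨(a.1 % N, a.2 % N), (a.1 / N, a.2 / N), ⟨Int.emod_nonneg _ hN'.ne',
    Int.emod_lt_of_pos _ hN', Int.emod_nonneg _ hN'.ne', Int.emod_lt_of_pos _ hN'⟩, ?_⟩
  exact Prod.ext (Int.emod_add_ediv_mul a.1 N).symm (Int.emod_add_ediv_mul a.2 N).symm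

theorem forall_gaborKernel_iff_forall_inNsq {L N : ℕ} (hN : 0 < N) (M : ℕ)
    (g h : ℕ → ℤ × ℤ → ℍ) (c : ℤ × ℤ → ℍ) :
    (∀ a p : ℤ × ℤ, gaborKernel L N g h a (a.1 + p.1 * M, a.2 + p.2 * M) = c p) ↔
      ∀ k, InNsq N k → ∀ p, gaborGmix L M N g h k p = c p := by
  simp only [gaborGmix_eq_gaborKernel]
  refine ⟨fun hK k _ p => hK k p, fun hK a p => ?_⟩
  obtain ⟨k, q, hk, rfl⟩ := exists_inNsq_add_mul hN a
  rw [← hK k hk p, ← gaborKernel_add_mul L N g h k _ q]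
  congr 1
  ext <;> dsimp only <;> ring

theorem stmt_17_general (L M N : ℕ) (hM : 0 < M) (hN : 0 < N)
    (g h : ℕ → ℤ × ℤ → ℍ)
    (hg : ∀ l < L, MemL2 (g l)) (hh : ∀ l < L, MemL2 (h l))
    (hgreal : ∀ l < L, IsRealValued (g l)) (hhreal : ∀ l < L, IsRealValued (h l)) :
    AreDual L M N g h ↔
      ∀ k : ℤ × ℤ, InNsq N k → ∀ p : ℤ × ℤ,
        gaborGmix L M N g h k p = if p = 0 then (((M : ℍ)) ^ 2)⁻¹ else 0 := by
  rw [areDual_iff_gaborKernel_mul_congrWeight hM hN hg hh hgreal hhreal,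
    gaborKernel_mul_congrWeight_iff hM, forall_gaborKernel_iff_forall_inNsq hN]

/-- characterization of dual Gabor frames with real-valued windows. -/
theorem stmt_17 (L M N : ℕ) (hL : 0 < L) (hM : 0 < M) (hN : 0 < N)
    (g h : ℕ → ℤ × ℤ → ℍ)
    (hg : ∀ l < L, MemL2 (g l)) (hh : ∀ l < L, MemL2 (h l))
    (hgreal : ∀ l < L, IsRealValued (g l)) (hhreal : ∀ l < L, IsRealValued (h l)) :
    AreDual L M N g h ↔
      ∀ k : ℤ × ℤ, InNsq N k → ∀ p : ℤ × ℤ,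
        gaborGmix L M N g h k p = if p = 0 then (((M : ℍ)) ^ 2)⁻¹ else 0 :=
  stmt_17_general L M N hM hN g h hg hh hgreal hhreal
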